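/- Suppose ξ : S_{=ℓ} → ℤ satisfies E'(ξ)(U) = 0 for every U ∈ S_{<ℓ}. For an R-submodule V of M define V^⊥ = {y ∈ W : tr(x·y) = 0 for all x ∈ V}, where W = M_{m×k}(F_q) is the right R-module of m×k matrices and tr denotes the trace of the k×k matrix x·y. Then ∑_{V ∈ S_{=ℓ}} ξ(V) 1_{V^⊥} = 0 as a function W → ℤ; that is, for every y ∈ W, ∑_{V ∈ S_{=ℓ}, y ∈ V^⊥} ξ(V) = 0. -/

import Mathlib

variable (F : Type) [Field F] [Fintype F] (k m : ℕ)

/-- The matrix module `M = M_{k×m}(F)` as a left module over `R = M_{k×k}(F)`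
via matrix multiplication. -/
instance matSMul : SMul (Matrix (Fin k) (Fin k) F) (Matrix (Fin k) (Fin m) F) :=
  ⟨fun A X => A * X⟩

instance matModule : Module (Matrix (Fin k) (Fin k) F) (Matrix (Fin k) (Fin m) F) where
  one_smul X := Matrix.one_mul X
  mul_smul A B X := Matrix.mul_assoc A B X
  smul_zero A := Matrix.mul_zero A
  smul_add A X Y := Matrix.mul_add A X Y
  add_smul A B X := Matrix.add_mul A B X
  zero_smul X := Matrix.zero_mul X

instance matTower :
    IsScalarTower F (Matrix (Fin k) (Fin k) F) (Matrix (Fin k) (Fin m) F) :=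
  ⟨fun c A X => Matrix.smul_mul c A X⟩

noncomputable instance :
    Fintype (Submodule (Matrix (Fin k) (Fin k) F) (Matrix (Fin k) (Fin m) F)) :=
  Fintype.ofFinite _

/-- The dimension of an `R`-submodule `U ⊆ M`, i.e. `dim_{F_q}(U) / k`. -/
noncomputable def dimk
    (U : Submodule (Matrix (Fin k) (Fin k) F) (Matrix (Fin k) (Fin m) F)) : ℕ :=
  Module.finrank F (U.restrictScalars F) / k

open Classical in
/-- `η_V(U) = (−1)^(dim V − dim U) · q^(binom(dim V − dim U, 2))` if `U ⊆ V`, else `0`. -/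
noncomputable def etaV
    (V U : Submodule (Matrix (Fin k) (Fin k) F) (Matrix (Fin k) (Fin m) F)) : ℚ :=
  if U ≤ V then
    (-1 : ℚ) ^ (dimk F k m V - dimk F k m U) *
      (Fintype.card F : ℚ) ^ ((dimk F k m V - dimk F k m U).choose 2)
  else 0

/-!
An `R`-submodule `V ⊆ M` is determined by its row space `rowSpace V ⊆ F^m`; `dim V` is the
dimension of the row space, and `y ∈ V^⊥` iff `rowSpace V ⊆ K := {v | v y = 0}`, a subspace of
codimension at most `k < ℓ`. As `η_V(U)` is a nonzero constant times `[U ⊆ V]`, the hypothesis says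
`∑_{V ⊇ U} ξ(V) = 0` whenever `dim U < ℓ`, hence `∑_{V ⊇ U} ξ(V) = ∑_{V = U} ξ(V)` for every `U`.
Counting `j`-tuples of vectors of `K` by the subspace they span turns this into
`∑_V ξ(V) t ^ dim (V ∩ K) = (∑_{V ⊆ K} ξ(V)) ∏_{i < ℓ} (t - q^i)` at `t = q^j`, for every `j`.
Both sides are polynomials of degree at most `ℓ` in `t`, so they agree identically. At `t = 0` the
left side vanishes, since `dim V + dim K > m` forces `V ∩ K ≠ 0`, while the product does not.
-/

open Module Submodule Finset Polynomial Matrix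

theorem Finset.sum_mul_card_filter_eq_sum_sum_filter {R α ι : Type*} [Semiring R] [Fintype ι]
    (s : Finset α) (p : ι → α → Prop) [∀ i a, Decidable (p i a)] (ξ : ι → R) :
    ∑ i, ξ i * #{a ∈ s | p i a} = ∑ a ∈ s, ∑ i with p i a, ξ i := by
  simp only [card_filter, Nat.cast_sum, Nat.cast_ite, Nat.cast_one, Nat.cast_zero, mul_sum,
    mul_ite, mul_one, mul_zero, sum_filter]
  exact sum_comm

theorem Polynomial.eq_zero_of_eval_pow_eq_mul_prod {R : Type*} [CommRing R] [LinearOrder R]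
    [IsStrictOrderedRing R] {P : R[X]} {q c : R} {l : ℕ} (hq : 1 < q)
    (hP : P.natDegree ≤ l) (hP0 : P.eval 0 = 0)
    (h : ∀ j : ℕ, P.eval (q ^ j) = c * ∏ t ∈ range l, (q ^ j - q ^ t)) : c = 0 := by
  set Q := P - C c * ∏ t ∈ range l, (X - C (q ^ t))
  have hQ : Q = 0 := by
    refine eq_zero_of_natDegree_lt_card_of_eval_eq_zero Q
      (f := fun j : Fin (l + 1) => q ^ (j : ℕ)) ?_ (fun j => ?_) ?_
    · exact fun a b hab => Fin.ext (pow_right_injective₀ (zero_lt_one.trans hq) hq.ne' hab)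
    · simp [Q, eval_prod, h]
    · refine (natDegree_sub_le _ _).trans_lt ?_
      rw [Fintype.card_fin, Nat.lt_succ_iff]
      exact max_le hP ((natDegree_C_mul_le _ _).trans
        ((natDegree_finsetProd_X_sub_C_eq_card _ _).trans (card_range l)).le)
  have h0 := congrArg (eval 0) hQ
  simp only [Q, eval_sub, eval_mul, eval_C, eval_prod, eval_X, hP0, zero_sub, eval_zero,
    neg_eq_zero, mul_eq_zero] at h0
  exact h0.resolve_right
    (prod_ne_zero_iff.2 fun t _ => neg_ne_zero.2 (pow_ne_zero _ (zero_lt_one.trans hq).ne'))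

theorem span_range_subtype_eq_iff {R M : Type*} [Semiring R] [AddCommMonoid M] [Module R M]
    (V : Submodule R M) {ι : Type*} (u : ι → V) :
    span R (Set.range fun i => (u i : M)) = V ↔ span R (Set.range u) = ⊤ := by
  rw [Set.range_comp' Subtype.val u, ← V.coe_subtype, span_image,
    (map_injective_of_injective V.injective_subtype).eq_iff' (map_subtype_top V)]

section LinearAlgebra

variable {𝕜 E : Type*} [Field 𝕜] [AddCommGroup E] [Module 𝕜 E]

theorem span_range_row_eq_top_iff_linearIndependent_col {ι κ : Type*} [Fintype ι] [Fintype κ]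
    (A : Matrix ι κ 𝕜) : span 𝕜 (Set.range A.row) = ⊤ ↔ LinearIndependent 𝕜 A.col := by
  rw [eq_top_iff_finrank_eq, ← A.rank_eq_finrank_span_row, A.rank_eq_finrank_span_cols,
    linearIndependent_iff_card_eq_finrank_span, Set.finrank, finrank_fintype_fun_eq_card, eq_comm]

theorem inf_ker_ne_bot_of_finrank_lt {E' : Type*} [AddCommGroup E'] [Module 𝕜 E']
    [FiniteDimensional 𝕜 E'] (f : E →ₗ[𝕜] E') (p : Submodule 𝕜 E) [FiniteDimensional 𝕜 p]
    (h : finrank 𝕜 E' < finrank 𝕜 p) : p ⊓ LinearMap.ker f ≠ ⊥ := by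
  simpa [LinearMap.ker_eq_bot, disjoint_iff] using
    LinearMap.ker_ne_bot_of_finrank_lt (f := f.domRestrict p) h

variable [FiniteDimensional 𝕜 E] {ι : Type*} [Fintype ι] {V : ι → Submodule 𝕜 E} {l : ℕ}
  {ξ : ι → ℤ}

open Classical in
theorem sum_filter_le_eq_sum_filter_eq (hV : ∀ i, finrank 𝕜 (V i) = l)
    (hξ : ∀ U : Submodule 𝕜 E, finrank 𝕜 U < l → ∑ i with U ≤ V i, ξ i = 0)
    (U : Submodule 𝕜 E) : ∑ i with U ≤ V i, ξ i = ∑ i with U = V i, ξ i := by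
  rcases lt_or_ge (finrank 𝕜 U) l with hU | hU
  · refine (hξ U hU).trans (sum_eq_zero fun i hi => ?_).symm
    rw [(mem_filter.1 hi).2, hV i] at hU
    exact absurd hU (lt_irrefl l)
  · refine sum_congr (filter_congr fun i _ => ⟨fun h => ?_, le_of_eq⟩) fun _ _ => rfl
    exact eq_of_le_of_finrank_le h (hV i ▸ hU)

variable [Fintype 𝕜]

theorem natCard_span_range_eq_top (κ : Type*) [Fintype κ] :
    (Nat.card {u : κ → E // span 𝕜 (Set.range u) = ⊤} : ℤ) =
      ∏ t ∈ range (finrank 𝕜 E), ((Fintype.card 𝕜 : ℤ) ^ Fintype.card κ - Fintype.card 𝕜 ^ t) := by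
  set n := finrank 𝕜 E
  let e : E ≃ₗ[𝕜] (Fin n → 𝕜) := LinearEquiv.ofFinrankEq _ _ (by simp [n])
  have hcoord : {u : κ → E // span 𝕜 (Set.range u) = ⊤} ≃
      {v : Fin n → κ → 𝕜 // LinearIndependent 𝕜 v} :=
    ((Equiv.arrowCongr (Equiv.refl κ) e.toEquiv).trans (Equiv.piComm _)).subtypeEquiv fun u => by
      change _ ↔ LinearIndependent 𝕜 (Matrix.of fun i => e (u i)).col
      rw [← span_range_row_eq_top_iff_linearIndependent_col]
      change _ ↔ span 𝕜 (Set.range (e ∘ u)) = ⊤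
      rw [Set.range_comp, ← LinearEquiv.coe_coe, span_image, Submodule.map_eq_top_iff]
  rw [Nat.card_congr hcoord]
  rcases le_or_gt n (Fintype.card κ) with hn | hn
  · rw [card_linearIndependent (by simpa using hn), finrank_fintype_fun_eq_card, Nat.cast_prod,
      Fin.prod_univ_eq_prod_range
        (fun t => ((Fintype.card 𝕜 ^ Fintype.card κ - Fintype.card 𝕜 ^ t : ℕ) : ℤ))]
    refine prod_congr rfl fun t ht => ?_
    rw [Nat.cast_sub (Nat.pow_le_pow_right Fintype.card_pos (by grind))]
    push_cast; rfl
  · have : IsEmpty {v : Fin n → κ → 𝕜 // LinearIndependent 𝕜 v} :=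
      ⟨fun v => (v.2.fintype_card_le_finrank.trans_lt (by simpa using hn)).false⟩
    rw [Nat.card_of_isEmpty, Nat.cast_zero, eq_comm]
    exact prod_eq_zero (mem_range.2 hn) (sub_self _)

theorem natCard_span_range_eq (V : Submodule 𝕜 E) (κ : Type*) [Fintype κ] :
    (Nat.card {w : κ → E // span 𝕜 (Set.range w) = V} : ℤ) =
      ∏ t ∈ range (finrank 𝕜 V), ((Fintype.card 𝕜 : ℤ) ^ Fintype.card κ - Fintype.card 𝕜 ^ t) := by
  rw [← natCard_span_range_eq_top]
  refine congrArg _ (Nat.card_congr ?_)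
  exact {
    toFun w := ⟨fun i => ⟨w.1 i, w.2.le (subset_span ⟨i, rfl⟩)⟩,
      (span_range_subtype_eq_iff V _).1 w.2⟩
    invFun u := ⟨fun i => u.1 i, (span_range_subtype_eq_iff V _).2 u.2⟩
    left_inv _ := rfl
    right_inv _ := rfl }

theorem natCard_forall_mem (S : Submodule 𝕜 E) (κ : Type*) [Fintype κ] :
    Nat.card {w : κ → E // ∀ i, w i ∈ S} = Fintype.card 𝕜 ^ (Fintype.card κ * finrank 𝕜 S) := by
  rw [Nat.card_congr Equiv.subtypePiEquivPi, Nat.card_fun,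
    Module.natCard_eq_pow_finrank (K := 𝕜), Nat.card_eq_fintype_card, Nat.card_eq_fintype_card,
    ← pow_mul, mul_comm]

open Classical in
theorem sum_mul_pow_finrank_inf_eq (hV : ∀ i, finrank 𝕜 (V i) = l)
    (hξ : ∀ U : Submodule 𝕜 E, finrank 𝕜 U < l → ∑ i with U ≤ V i, ξ i = 0)
    (K : Submodule 𝕜 E) (j : ℕ) :
    ∑ i, ξ i * ((Fintype.card 𝕜 : ℤ) ^ j) ^ finrank 𝕜 ↥(V i ⊓ K) =
      (∑ i with V i ≤ K, ξ i) * ∏ t ∈ range l, ((Fintype.card 𝕜 : ℤ) ^ j - Fintype.card 𝕜 ^ t) := by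
  have : Finite E := Module.finite_of_finite 𝕜
  have := Fintype.ofFinite E
  have card_eq (p : (Fin j → E) → Prop) [DecidablePred p] : #{w | p w} = Nat.card {w // p w} := by
    rw [Nat.card_eq_fintype_card, Fintype.card_subtype]
  let T : Finset (Fin j → E) := {w | ∀ a, w a ∈ K}
  have hle (i : ι) : ((Fintype.card 𝕜 : ℤ) ^ j) ^ finrank 𝕜 ↥(V i ⊓ K) =
      #{w ∈ T | span 𝕜 (Set.range w) ≤ V i} := by
    have hmem (w : Fin j → E) :
        ((∀ a, w a ∈ K) ∧ span 𝕜 (Set.range w) ≤ V i) ↔ ∀ a, w a ∈ V i ⊓ K := by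
      simp only [span_le, Set.range_subset_iff, SetLike.mem_coe, Submodule.mem_inf, forall_and,
        and_comm]
    rw [filter_filter, card_eq, Nat.card_congr (Equiv.subtypeEquivRight hmem), natCard_forall_mem,
      Fintype.card_fin, pow_mul]
    push_cast; rfl
  have heq (i : ι) : (#{w ∈ T | span 𝕜 (Set.range w) = V i} : ℤ) =
      if V i ≤ K then ∏ t ∈ range l, ((Fintype.card 𝕜 : ℤ) ^ j - Fintype.card 𝕜 ^ t) else 0 := by
    rw [filter_filter, card_eq]
    split_ifs with hVK
    · rw [Nat.card_congr (Equiv.subtypeEquivRight fun w => and_iff_right_of_imp fun hw a =>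
        hVK (hw ▸ subset_span ⟨a, rfl⟩)), natCard_span_range_eq, Fintype.card_fin, hV i]
    · have : IsEmpty {w : Fin j → E // (∀ a, w a ∈ K) ∧ span 𝕜 (Set.range w) = V i} :=
        ⟨fun w => hVK (w.2.2 ▸ span_le.2 (Set.range_subset_iff.2 w.2.1))⟩
      rw [Nat.card_of_isEmpty, Nat.cast_zero]
  calc ∑ i, ξ i * ((Fintype.card 𝕜 : ℤ) ^ j) ^ finrank 𝕜 ↥(V i ⊓ K)
      = ∑ i, ξ i * #{w ∈ T | span 𝕜 (Set.range w) ≤ V i} := by simp_rw [hle]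
    _ = ∑ w ∈ T, ∑ i with span 𝕜 (Set.range w) ≤ V i, ξ i :=
      sum_mul_card_filter_eq_sum_sum_filter _ _ _
    _ = ∑ w ∈ T, ∑ i with span 𝕜 (Set.range w) = V i, ξ i :=
      sum_congr rfl fun w _ => sum_filter_le_eq_sum_filter_eq hV hξ _
    _ = ∑ i, ξ i * #{w ∈ T | span 𝕜 (Set.range w) = V i} :=
      (sum_mul_card_filter_eq_sum_sum_filter _ _ _).symm
    _ = _ := by simp_rw [heq, mul_ite, mul_zero, ← sum_filter, sum_mul]

open Classical in
theorem sum_filter_le_eq_zero (hV : ∀ i, finrank 𝕜 (V i) = l)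
    (hξ : ∀ U : Submodule 𝕜 E, finrank 𝕜 U < l → ∑ i with U ≤ V i, ξ i = 0)
    (K : Submodule 𝕜 E) (hK : ∀ i, V i ⊓ K ≠ ⊥) : ∑ i with V i ≤ K, ξ i = 0 := by
  refine eq_zero_of_eval_pow_eq_mul_prod (P := ∑ i, C (ξ i) * X ^ finrank 𝕜 ↥(V i ⊓ K))
    (q := (Fintype.card 𝕜 : ℤ)) (l := l) (by exact_mod_cast Fintype.one_lt_card) ?_ ?_ fun j => ?_
  · refine natDegree_sum_le_of_forall_le _ _ fun i _ => (natDegree_C_mul_X_pow_le _ _).trans ?_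
    exact hV i ▸ finrank_mono inf_le_left
  · simp [eval_finsetSum, zero_pow, finrank_eq_zero, hK]
  · simpa [eval_finsetSum] using sum_mul_pow_finrank_inf_eq hV hξ K j

end LinearAlgebra

section RowSpace

variable {F : Type} [Field F] {k m : ℕ}

def rowsIn (U : Submodule F (Fin m → F)) :
    Submodule (Matrix (Fin k) (Fin k) F) (Matrix (Fin k) (Fin m) F) where
  carrier := {x | ∀ i, x i ∈ U}
  add_mem' hx hy i := U.add_mem (hx i) (hy i)
  zero_mem' _ := U.zero_mem
  smul_mem' A x hx i := by
    change (A * x) i ∈ U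
    rw [mul_apply_eq_vecMul, vecMul_eq_sum]
    exact U.sum_mem fun s _ => U.smul_mem _ (hx s)

/-- Since `V` is stable under left multiplication, `v` is a row of some element of `V` iff the
matrix all of whose rows are `v` lies in `V`. -/
def rowSpace (V : Submodule (Matrix (Fin k) (Fin k) F) (Matrix (Fin k) (Fin m) F)) :
    Submodule F (Fin m → F) where
  carrier := {v | replicateRow (Fin k) v ∈ V}
  add_mem' {v w} hv hw := by
    simpa only [Set.mem_ofPred_eq, replicateRow_add] using V.add_mem hv hw
  zero_mem' := by simp only [Set.mem_ofPred_eq, replicateRow_zero, V.zero_mem]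
  smul_mem' c v hv := by
    simpa only [Set.mem_ofPred_eq, replicateRow_smul] using V.smul_of_tower_mem c hv

variable {V : Submodule (Matrix (Fin k) (Fin k) F) (Matrix (Fin k) (Fin m) F)}
  {x : Matrix (Fin k) (Fin m) F}

theorem row_mem_rowSpace (hx : x ∈ V) (i : Fin k) : x i ∈ rowSpace V := by
  change replicateRow (Fin k) (x.row i) ∈ V
  rw [← single_one_vecMul, replicateRow_vecMul]
  exact V.smul_mem _ hx

theorem mem_iff_forall_row_mem_rowSpace : x ∈ V ↔ ∀ i, x i ∈ rowSpace V := by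
  refine ⟨row_mem_rowSpace, fun h => ?_⟩
  have hx : x = ∑ i, diagonal (Pi.single i (1 : F)) * replicateRow (Fin k) (x i) := by
    ext r c
    simp [Matrix.sum_apply, diagonal_mul, Pi.single_apply]
  rw [hx]
  exact V.sum_mem fun i _ => V.smul_mem _ (h i)

theorem rowSpace_le_rowSpace_iff
    {U : Submodule (Matrix (Fin k) (Fin k) F) (Matrix (Fin k) (Fin m) F)} :
    rowSpace U ≤ rowSpace V ↔ U ≤ V :=
  ⟨fun h _ hx => mem_iff_forall_row_mem_rowSpace.2 fun i => h (row_mem_rowSpace hx i),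
    fun h _ hv => h hv⟩

theorem rowSpace_rowsIn (hk : 0 < k) (U : Submodule F (Fin m → F)) :
    rowSpace (rowsIn (k := k) U) = U := by
  have : NeZero k := ⟨hk.ne'⟩
  ext v
  change (∀ _ : Fin k, v ∈ U) ↔ v ∈ U
  exact forall_const (Fin k)

def restrictScalarsEquivRowSpace
    (V : Submodule (Matrix (Fin k) (Fin k) F) (Matrix (Fin k) (Fin m) F)) :
    V.restrictScalars F ≃ₗ[F] (Fin k → rowSpace V) where
  toFun x i := ⟨x.1 i, row_mem_rowSpace x.2 i⟩
  map_add' _ _ := rfl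
  map_smul' _ _ := rfl
  invFun f := ⟨of fun i => f i, mem_iff_forall_row_mem_rowSpace.2 fun i => (f i).2⟩
  left_inv _ := rfl
  right_inv _ := rfl

theorem dimk_eq_finrank_rowSpace (hk : 0 < k)
    (V : Submodule (Matrix (Fin k) (Fin k) F) (Matrix (Fin k) (Fin m) F)) :
    dimk F k m V = finrank F (rowSpace V) := by
  rw [dimk, (restrictScalarsEquivRowSpace V).finrank_eq, finrank_pi_fintype, sum_const, card_univ,
    Fintype.card_fin, smul_eq_mul, Nat.mul_div_cancel_left _ hk]

theorem forall_trace_mul_eq_zero_iff (hk : 0 < k) (y : Matrix (Fin m) (Fin k) F) :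
    (∀ x ∈ V, trace (x * y) = 0) ↔ rowSpace V ≤ LinearMap.ker (vecMulLinear y) := by
  have : NeZero k := ⟨hk.ne'⟩
  constructor
  · intro h v hv
    have hvy : replicateRow (Fin k) v * y = 0 := by
      ext i j
      simpa [trace_single_mul, Matrix.mul_assoc] using
        h (single j i 1 * replicateRow (Fin k) v) (V.smul_mem (single j i 1) hv)
    refine replicateRow_injective (ι := Fin k) ?_
    rw [vecMulLinear_apply, replicateRow_vecMul, hvy, replicateRow_zero]
  · intro h x hx
    have hxy : x * y = 0 :=
      funext fun i => (mul_apply_eq_vecMul x y i).trans (h (row_mem_rowSpace hx i))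
    rw [hxy, trace_zero]

end RowSpace

section KernelCondition

variable {F k m}

open Classical in
theorem sum_filter_le_eq_zero_of_sum_mul_etaV_eq_zero {l : ℕ}
    {X : Submodule (Matrix (Fin k) (Fin k) F) (Matrix (Fin k) (Fin m) F)}
    {ξ : {V : Submodule (Matrix (Fin k) (Fin k) F) (Matrix (Fin k) (Fin m) F) //
            dimk F k m V = l ∧ V ⊓ X = ⊥} → ℤ}
    (U : Submodule (Matrix (Fin k) (Fin k) F) (Matrix (Fin k) (Fin m) F))
    (h : U ⊓ X = ⊥ → ∑ V, (ξ V : ℚ) * etaV F k m V U = 0) :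
    ∑ V with U ≤ V.1, ξ V = 0 := by
  by_cases hUX : U ⊓ X = ⊥
  · obtain ⟨c, hc, hη⟩ : ∃ c : ℚ, c ≠ 0 ∧ ∀ V : {V : Submodule (Matrix (Fin k) (Fin k) F)
        (Matrix (Fin k) (Fin m) F) // dimk F k m V = l ∧ V ⊓ X = ⊥},
          etaV F k m V U = c * if U ≤ V.1 then 1 else 0 :=
      ⟨(-1) ^ (l - dimk F k m U) * (Fintype.card F : ℚ) ^ ((l - dimk F k m U).choose 2),
        mul_ne_zero (pow_ne_zero _ (by norm_num)) (pow_ne_zero _ (by simp)),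
        fun V => by rw [etaV, V.2.1, mul_ite, mul_one, mul_zero]⟩
    have hsum : ∑ V, (ξ V : ℚ) * etaV F k m V U = c * ∑ V with U ≤ V.1, (ξ V : ℚ) := by
      rw [sum_filter, mul_sum]
      exact sum_congr rfl fun V _ => by rw [hη]; split_ifs <;> ring
    rw [hsum] at h
    exact_mod_cast (mul_eq_zero.1 (h hUX)).resolve_left hc
  · refine sum_eq_zero fun V hV => absurd ?_ hUX
    exact le_bot_iff.1 (V.2.2 ▸ inf_le_inf_right X (mem_filter.1 hV).2)

end KernelCondition

open Classical in
theorem sum_indicator_perp_eq_zero_of_ker_E' (hk : 0 < k) (l : ℕ) (hl : l > k)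
    (X : Submodule (Matrix (Fin k) (Fin k) F) (Matrix (Fin k) (Fin m) F))
    (ξ : {V : Submodule (Matrix (Fin k) (Fin k) F) (Matrix (Fin k) (Fin m) F) //
            dimk F k m V = l ∧ V ⊓ X = ⊥} → ℤ)
    (hker : ∀ U : Submodule (Matrix (Fin k) (Fin k) F) (Matrix (Fin k) (Fin m) F),
      dimk F k m U < l → U ⊓ X = ⊥ →
      ∑ V : {V : Submodule (Matrix (Fin k) (Fin k) F) (Matrix (Fin k) (Fin m) F) //
               dimk F k m V = l ∧ V ⊓ X = ⊥},
        (ξ V : ℚ) * etaV F k m (V : Submodule (Matrix (Fin k) (Fin k) F) (Matrix (Fin k) (Fin m) F)) U = 0) :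
    ∀ y : Matrix (Fin m) (Fin k) F,
      ∑ V : {V : Submodule (Matrix (Fin k) (Fin k) F) (Matrix (Fin k) (Fin m) F) //
               dimk F k m V = l ∧ V ⊓ X = ⊥},
        Set.indicator
          {y' : Matrix (Fin m) (Fin k) F |
            ∀ x ∈ (V : Submodule (Matrix (Fin k) (Fin k) F) (Matrix (Fin k) (Fin m) F)),
              Matrix.trace (x * y') = 0}
          (fun _ => ξ V) y = 0 := by
  intro y
  have hrank (V : {V : Submodule (Matrix (Fin k) (Fin k) F) (Matrix (Fin k) (Fin m) F) //
      dimk F k m V = l ∧ V ⊓ X = ⊥}) : finrank F (rowSpace V.1) = l := by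
    rw [← dimk_eq_finrank_rowSpace hk V.1]
    exact V.2.1
  have hξ (U : Submodule F (Fin m → F)) (hU : finrank F U < l) :
      ∑ V with U ≤ rowSpace V.1, ξ V = 0 := by
    have hdim : dimk F k m (rowsIn U) < l := by
      rwa [dimk_eq_finrank_rowSpace hk, rowSpace_rowsIn hk]
    simpa only [← rowSpace_le_rowSpace_iff, rowSpace_rowsIn hk] using
      sum_filter_le_eq_zero_of_sum_mul_etaV_eq_zero (rowsIn U) (hker _ hdim)
  have hK (V : {V : Submodule (Matrix (Fin k) (Fin k) F) (Matrix (Fin k) (Fin m) F) //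
      dimk F k m V = l ∧ V ⊓ X = ⊥}) : rowSpace V.1 ⊓ LinearMap.ker (vecMulLinear y) ≠ ⊥ :=
    inf_ker_ne_bot_of_finrank_lt _ _ (by rw [hrank V, finrank_fin_fun]; exact hl)
  simp only [Set.indicator_apply, Set.mem_ofPred_eq, forall_trace_mul_eq_zero_iff hk]
  rw [← sum_filter]
  convert sum_filter_le_eq_zero hrank hξ _ hK
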